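/- The function f(x,y) = x·(y/(y-1))^R/(1 - e^{-x}y^R), over the region y > 1, x > 0, e^{-x}y^R < 1, when evaluated at y = R log R + 1 and x = R log y + 2 log R with R ≥ 6, satisfies f(x,y) ≤ e^{(1.8 + log log R)/log R}·R·log R. -/

import Mathlib

/-!
Write `L = log R`. Then `y - 1 = R L`, so `(y / (y - 1)) ^ R = (1 + 1 / (R L)) ^ R ≤ e^{1/L}`, and
`e^{-x} y^R = R^{-2}` exactly, while `log y ≤ log (R L) + 1 / (R L)` gives
`x ≤ R L + R log L + 1 / L + 2 L`. Splitting `e^{(1.8 + log L)/L} = e^{1/L} e^t` with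
`t = (0.8 + log L) / L`, it remains to show `R L + R log L + 1/L + 2L ≤ (1 - R^{-2}) e^t R L`.
By `e^t ≥ 1 + t + t^2/2`, the linear term `R L t = 0.8 R + R log L` absorbs `R log L`, and
`0.8 R` together with the quadratic term `≥ 0.32 R / L` beats the rest, a polynomial
inequality in `L` and `R` valid for `1 ≤ L ≤ R/4 + 0.4`.
-/

open Real

lemma one_add_div_pow_le_exp {a : ℝ} (ha : 0 ≤ a) (n : ℕ) : (1 + a / n) ^ n ≤ exp a := by
  simpa [neg_div] using
    one_sub_div_pow_le_exp_neg (n := n) (t := -a) (by linarith [n.cast_nonneg (α := ℝ)])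

lemma log_add_one_le_log_add_inv {a : ℝ} (ha : 0 < a) : log (a + 1) ≤ log a + a⁻¹ := by
  have h : a + 1 = a * (1 + a⁻¹) := by field_simp
  rw [h, log_mul ha.ne' (by positivity)]
  linarith [log_le_sub_one_of_pos (by positivity : 0 < 1 + a⁻¹)]

lemma mul_log_mul_log_add_one_le {R : ℝ} (hR : 0 < R) (hL : 0 < log R) :
    R * log (R * log R + 1) ≤ R * log R + R * log (log R) + (log R)⁻¹ := by
  have h := log_add_one_le_log_add_inv (mul_pos hR hL)
  rw [log_mul hR.ne' hL.ne'] at h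
  have hcancel : R * (R * log R)⁻¹ = (log R)⁻¹ := by field_simp
  linear_combination R * h + hcancel

lemma exp_neg_nat_mul_log_add_mul_pow {y : ℝ} (hy : 0 < y) (n : ℕ) (c : ℝ) :
    exp (-(n * log y + c)) * y ^ n = exp (-c) := by
  rw [neg_add, exp_add, exp_neg (n * log y), exp_nat_mul, exp_log hy]
  field_simp

lemma one_le_log_of_six_le {R : ℝ} (hR : 6 ≤ R) : 1 ≤ log R := by
  rw [le_log_iff_exp_le (by linarith)]
  linarith [exp_one_lt_d9]

lemma log_le_div_four_add {R : ℝ} (hR : 0 < R) : log R ≤ R / 4 + 0.4 := by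
  have h := log_le_sub_one_of_pos (by positivity : 0 < R / 4)
  rw [log_div hR.ne' (by norm_num), show (4 : ℝ) = 2 ^ 2 by norm_num, log_pow] at h
  linarith [log_two_lt_d9]

lemma inv_add_two_mul_add_three_mul_div_le {L R : ℝ} (hR : 6 ≤ R) (hL₁ : 1 ≤ L)
    (hL₂ : L ≤ R / 4 + 0.4) :
    L⁻¹ + 2 * L + 3 * L / R ≤ 0.8 * R + 0.32 * R / L := by
  have hpoly : R + 2 * L ^ 2 * R + 3 * L ^ 2 ≤ 0.8 * R ^ 2 * L + 0.32 * R ^ 2 := by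
    nlinarith [mul_nonneg (sub_nonneg.2 hL₁) (sub_nonneg.2 hL₂),
      mul_nonneg (sub_nonneg.2 hR) (sub_nonneg.2 hL₁),
      mul_nonneg (mul_nonneg (sub_nonneg.2 hL₁) (sub_nonneg.2 hL₂)) (by linarith : (0 : ℝ) ≤ R)]
  have hLR : 0 < L * R := by positivity
  rw [← sub_nonneg]
  have h : 0.8 * R + 0.32 * R / L - (L⁻¹ + 2 * L + 3 * L / R) =
      (0.8 * R ^ 2 * L + 0.32 * R ^ 2 - (R + 2 * L ^ 2 * R + 3 * L ^ 2)) / (L * R) := by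
    field_simp
  rw [h]
  exact div_nonneg (by linarith) hLR.le

lemma mul_log_add_le_one_sub_inv_sq_mul_exp {R : ℝ} (hR : 6 ≤ R) :
    R * log R + R * log (log R) + (log R)⁻¹ + 2 * log R
      ≤ (1 - (R ^ 2)⁻¹) * exp ((0.8 + log (log R)) / log R) * (R * log R) := by
  set L := log R
  set g := log L
  set t := (0.8 + g) / L
  have hL : 1 ≤ L := one_le_log_of_six_le hR
  have hg₀ : 0 ≤ g := log_nonneg hL
  have ht₀ : 0 ≤ t := by positivity
  have hexp_le : exp t ≤ 3 := by
    have ht₁ : t ≤ 1 := by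
      rw [div_le_one (by linarith)]
      linarith [log_le_sub_one_of_pos (by linarith : 0 < L)]
    linarith [exp_le_exp.2 ht₁, exp_one_lt_d9]
  have hLt : L * t = 0.8 + g := mul_div_cancel₀ _ (by linarith)
  have hRLt_sq : 0.32 * R / L ≤ R * L * (t ^ 2 / 2) := by
    rw [div_le_iff₀ (by linarith), show R * L * (t ^ 2 / 2) * L = R * (L * t) ^ 2 / 2 by ring, hLt]
    have hRg : 0 ≤ R * g := by positivity
    nlinarith [mul_nonneg hRg hg₀]
  calc R * L + R * g + L⁻¹ + 2 * L
      ≤ R * L * (1 + t + t ^ 2 / 2) - 3 * L / R := by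
        nlinarith [inv_add_two_mul_add_three_mul_div_le hR hL (log_le_div_four_add (by linarith))]
    _ ≤ R * L * exp t - exp t * L / R := by
        have : 0 ≤ L := by linarith
        gcongr
        exact quadratic_le_exp_of_nonneg ht₀
    _ = (1 - (R ^ 2)⁻¹) * exp t * (R * L) := by
        field_simp

/-- evaluating `f(x,y) = x (y/(y-1))^R / (1 - e^{-x} y^R)` at
`y = R log R + 1`, `x = R log y + 2 log R` for an integer `R ≥ 6`. -/
theorem f_eval_bound (R : ℕ) (hR : 6 ≤ R) (y x : ℝ)
    (hy : y = (R : ℝ) * Real.log R + 1)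
    (hx : x = (R : ℝ) * Real.log y + 2 * Real.log R) :
    x * (y / (y - 1)) ^ R / (1 - Real.exp (-x) * y ^ R)
      ≤ Real.exp ((1.8 + Real.log (Real.log R)) / Real.log R) * R * Real.log R := by
  have hR₆ : (6 : ℝ) ≤ R := by exact_mod_cast hR
  have hL : 1 ≤ log R := one_le_log_of_six_le hR₆
  have hdenom : exp (-x) * y ^ R = ((R : ℝ) ^ 2)⁻¹ := by
    rw [hx, exp_neg_nat_mul_log_add_mul_pow (by rw [hy]; positivity), exp_neg,
      show 2 * log (R : ℝ) = log ((R : ℝ) ^ 2) by rw [log_pow]; norm_num, exp_log (by positivity)]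
  have hbase : y / (y - 1) = 1 + (log R)⁻¹ / R := by
    rw [hy]
    field_simp
    ring
  have hx_le : x ≤ R * log R + R * log (log R) + (log R)⁻¹ + 2 * log R := by
    rw [hx, hy]
    linarith [mul_log_mul_log_add_one_le (by linarith) (by linarith : 0 < log (R : ℝ))]
  have hlogL : 0 ≤ log (log R) := log_nonneg hL
  have hinv_sq : ((R : ℝ) ^ 2)⁻¹ < 1 := inv_lt_one_of_one_lt₀ (by nlinarith)
  rw [hdenom, div_le_iff₀ (by linarith)]
  calc x * (y / (y - 1)) ^ R
      ≤ (R * log R + R * log (log R) + (log R)⁻¹ + 2 * log R) * exp (log R)⁻¹ := by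
        rw [hbase]
        exact mul_le_mul hx_le (one_add_div_pow_le_exp (by positivity) R) (by positivity)
          (by positivity)
    _ ≤ (1 - ((R : ℝ) ^ 2)⁻¹) * exp ((0.8 + log (log R)) / log R) * (R * log R)
          * exp (log R)⁻¹ := by
        gcongr
        exact mul_log_add_le_one_sub_inv_sq_mul_exp hR₆
    _ = exp ((1.8 + log (log R)) / log R) * R * log R * (1 - ((R : ℝ) ^ 2)⁻¹) := by
        rw [show (1.8 + log (log R)) / log R = (0.8 + log (log R)) / log R + (log R)⁻¹ by
          field_simp; ring, exp_add]
        ring
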